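/- arXiv:2009.14607 — 3 statements merged into one kernel-verified Lean document; each statement's English description precedes it below -/
import Mathlib

section
/- For j ∈ ℕ with j ≥ 1, let φ_j : ℝ → [0,1] be smooth compactly supported functions satisfying 𝟙_{[-2^{j-1},2^{j-1}]} ≤ φ_j ≤ 𝟙_{[-2^j,2^j]}, and set ψ_ℓ = (1/ℓ)∑_{j=1}^ℓ φ_j for ℓ ≥ 3. Then ψ_ℓ is smooth, 0 ≤ ψ_ℓ ≤ 1, ψ_ℓ(x) = 1 for |x| ≤ 1, ψ_ℓ(x) = 0 for |x| ≥ 2^ℓ, and the BMO norm of ψ_ℓ on ℝ is at most 16/ℓ. -/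
open MeasureTheory


lemma zero_of_abs_ge (f : ℝ → ℝ) (hf : Continuous f) (c : ℝ)
    (h0 : ∀ y : ℝ, c < |y| → f y = 0) : ∀ x : ℝ, c ≤ |x| → f x = 0 := by
  intro x hx
  have heq : Set.EqOn f 0 {y : ℝ | c < |y|} := fun y hy => h0 y hy
  have hcl : Set.EqOn f 0 (closure {y : ℝ | c < |y|}) :=
    heq.closure hf continuous_const
  apply hcl
  rcases le_abs'.mp hx with h | h
  · -- x ≤ -c
    have : x ∈ closure (Set.Iio (-c)) := by
      rw [closure_Iio]; exact h
    exact closure_mono (fun y (hy : y < -c) => by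
      simp only [Set.mem_setOf_eq]; rw [lt_abs]; right; linarith) this
  · -- c ≤ x
    have : x ∈ closure (Set.Ioi c) := by
      rw [closure_Ioi]; exact h
    exact closure_mono (fun y (hy : c < y) => by
      simp only [Set.mem_setOf_eq]; exact lt_of_lt_of_le hy (le_abs_self y)) this


lemma sum_meas_le_aux (a b M : ℝ) (hab : a < b) (hM : M = max |a| |b|)
    (S : Finset ℕ) (hS : ∀ j ∈ S, 1 ≤ j ∧ (2:ℝ)^(j-1) < M) :
    ∑ j ∈ S, (volume (Set.Ioc a b ∩ Set.Icc (-(2:ℝ)^(j-1)) ((2:ℝ)^(j-1)))).toReal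
      ≤ 5 * (b - a) := by
  classical
  set m : ℕ → ℝ := fun j =>
    (volume (Set.Ioc a b ∩ Set.Icc (-(2:ℝ)^(j-1)) ((2:ℝ)^(j-1)))).toReal with hm
  have hL : 0 < b - a := sub_pos.mpr hab
  have hm_nonneg : ∀ j, 0 ≤ m j := fun j => ENNReal.toReal_nonneg
  have hmL : ∀ j, m j ≤ b - a := by
    intro j
    have h1 : volume (Set.Ioc a b ∩ Set.Icc (-(2:ℝ)^(j-1)) ((2:ℝ)^(j-1)))
        ≤ volume (Set.Ioc a b) := measure_mono Set.inter_subset_left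
    have h2 : volume (Set.Ioc a b) = ENNReal.ofReal (b - a) := Real.volume_Ioc
    calc m j ≤ (volume (Set.Ioc a b)).toReal :=
          ENNReal.toReal_mono (by rw [h2]; exact ENNReal.ofReal_ne_top) h1
      _ = b - a := by rw [h2, ENNReal.toReal_ofReal hL.le]
  have hm2 : ∀ j, m j ≤ 2 * (2:ℝ)^(j-1) := by
    intro j
    have h1 : volume (Set.Ioc a b ∩ Set.Icc (-(2:ℝ)^(j-1)) ((2:ℝ)^(j-1)))
        ≤ volume (Set.Icc (-(2:ℝ)^(j-1)) ((2:ℝ)^(j-1))) := measure_mono Set.inter_subset_right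
    have h2 : volume (Set.Icc (-(2:ℝ)^(j-1)) ((2:ℝ)^(j-1)))
        = ENNReal.ofReal ((2:ℝ)^(j-1) - (-(2:ℝ)^(j-1))) := Real.volume_Icc
    calc m j ≤ (ENNReal.ofReal ((2:ℝ)^(j-1) - (-(2:ℝ)^(j-1)))).toReal :=
          ENNReal.toReal_mono ENNReal.ofReal_ne_top (h2 ▸ h1)
      _ ≤ 2 * (2:ℝ)^(j-1) := by
          rw [ENNReal.toReal_ofReal (by have := pow_pos (show (0:ℝ)<2 by norm_num) (j-1); linarith)]; ring_nf; exact le_refl _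
  have hmpos : ∀ j, m j ≠ 0 → M - (2:ℝ)^(j-1) ≤ b - a := by
    intro j hj
    have hne : (Set.Ioc a b ∩ Set.Icc (-(2:ℝ)^(j-1)) ((2:ℝ)^(j-1))).Nonempty := by
      by_contra h
      rw [Set.not_nonempty_iff_eq_empty] at h
      simp [hm, h] at hj
    obtain ⟨x, hxI, hxt⟩ := hne
    have hxa := hxI.1; have hxb := hxI.2
    have h1 : |x| ≤ (2:ℝ)^(j-1) := abs_le.mpr ⟨hxt.1, hxt.2⟩
    have hb' : |b| ≤ (2:ℝ)^(j-1) + (b - a) := by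
      have : |b| ≤ |x| + (b - x) := by
        rw [abs_le]; constructor <;> cases abs_le.mp (le_refl |x|) <;> nlinarith [abs_nonneg x, le_abs_self x, neg_abs_le x]
      nlinarith
    have ha' : |a| ≤ (2:ℝ)^(j-1) + (b - a) := by
      have : |a| ≤ |x| + (x - a) := by
        rw [abs_le]; constructor <;> nlinarith [le_abs_self x, neg_abs_le x]
      nlinarith
    rw [hM, sub_le_iff_le_add, max_le_iff]; constructor <;> nlinarith [ha', hb']
  -- main combinatorial argument
  set P : Finset ℕ := S.filter (fun j => m j ≠ 0) with hP
  have hsum : ∑ j ∈ S, m j = ∑ j ∈ P, m j := (Finset.sum_filter_ne_zero S).symm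
  rw [hsum]
  rcases P.eq_empty_or_nonempty with hPe | hPne
  · rw [hPe, Finset.sum_empty]; positivity
  · set j₁ := P.max' hPne with hj₁
    have hj₁P : j₁ ∈ P := P.max'_mem hPne
    have hj₁S : j₁ ∈ S := Finset.mem_filter.mp hj₁P |>.1
    rw [← Finset.add_sum_erase _ _ hj₁P]
    rcases (P.erase j₁).eq_empty_or_nonempty with hQe | hQne
    · rw [hQe, Finset.sum_empty]; nlinarith [hmL j₁]
    · set j₂ := (P.erase j₁).max' hQne with hj₂
      have hj₂P : j₂ ∈ P.erase j₁ := (P.erase j₁).max'_mem hQne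
      have hj₂lt : j₂ < j₁ := lt_of_le_of_ne (P.le_max' _ (Finset.mem_of_mem_erase hj₂P))
        (Finset.ne_of_mem_erase hj₂P)
      have hj₂1 : 1 ≤ j₂ := (hS j₂ (Finset.mem_filter.mp (Finset.mem_of_mem_erase hj₂P) |>.1)).1
      -- each term in erase bounded by 2^j, and erase ⊆ Icc 1 j₂
      have hsub : P.erase j₁ ⊆ Finset.Icc 1 j₂ := by
        intro j hj
        rw [Finset.mem_Icc]
        exact ⟨(hS j (Finset.mem_filter.mp (Finset.mem_of_mem_erase hj) |>.1)).1,
          (P.erase j₁).le_max' j hj⟩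
      have h2 : ∑ j ∈ P.erase j₁, m j ≤ ∑ j ∈ Finset.Icc 1 j₂, (2:ℝ)^j := by
        calc ∑ j ∈ P.erase j₁, m j ≤ ∑ j ∈ P.erase j₁, (2:ℝ)^j := by
              apply Finset.sum_le_sum
              intro j hj
              have hj1 : 1 ≤ j := (hS j (Finset.mem_filter.mp (Finset.mem_of_mem_erase hj) |>.1)).1
              calc m j ≤ 2 * (2:ℝ)^(j-1) := hm2 j
                _ = (2:ℝ)^j := by
                    rw [← pow_succ']
                    congr 1
                    omega
          _ ≤ ∑ j ∈ Finset.Icc 1 j₂, (2:ℝ)^j :=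
              Finset.sum_le_sum_of_subset_of_nonneg hsub (fun j _ _ => by positivity)
      have h3 : ∑ j ∈ Finset.Icc 1 j₂, (2:ℝ)^j ≤ (2:ℝ)^(j₂+1) := by
        have hsub2 : Finset.Icc 1 j₂ ⊆ Finset.range (j₂+1) := by
          intro j hj; rw [Finset.mem_range]; rw [Finset.mem_Icc] at hj; omega
        calc ∑ j ∈ Finset.Icc 1 j₂, (2:ℝ)^j ≤ ∑ j ∈ Finset.range (j₂+1), (2:ℝ)^j :=
              Finset.sum_le_sum_of_subset_of_nonneg hsub2 (fun j _ _ => by positivity)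
          _ = (2:ℝ)^(j₂+1) - 1 := by
              rw [geom_sum_eq (by norm_num)]; ring
          _ ≤ (2:ℝ)^(j₂+1) := by linarith
      -- lower bound for L
      have hLlow : (2:ℝ)^(j₂-1) ≤ b - a := by
        have hA : M - (2:ℝ)^(j₂-1) ≤ b - a :=
          hmpos j₂ ((Finset.mem_filter.mp (Finset.mem_of_mem_erase hj₂P)).2)
        have hB : (2:ℝ)^(j₁-1) < M := (hS j₁ hj₁S).2
        have hC : (2:ℝ)^(j₂) ≤ (2:ℝ)^(j₁-1) :=
          pow_le_pow_right₀ one_le_two (by omega)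
        have hD : (2:ℝ)^(j₂) = 2 * (2:ℝ)^(j₂-1) := by
          rw [← pow_succ']; congr 1; omega
        nlinarith
      have h4 : (2:ℝ)^(j₂+1) ≤ 4 * (b - a) := by
        have : (2:ℝ)^(j₂+1) = 4 * (2:ℝ)^(j₂-1) := by
          rw [show j₂ + 1 = (j₂ - 1) + 2 by omega, pow_add]; ring
        nlinarith
      nlinarith [hmL j₁, h2, h3]

/-- Lemma 3.8: if `φ_j` are smooth compactly supported with
`𝟙_{[-2^{j-1},2^{j-1}]} ≤ φ_j ≤ 𝟙_{[-2^j,2^j]}` and `ψ_ℓ = (1/ℓ) ∑_{j=1}^ℓ φ_j` for `ℓ ≥ 3`,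
then `ψ_ℓ` is smooth, `0 ≤ ψ_ℓ ≤ 1`, `ψ_ℓ = 1` on `|x| ≤ 1`, `ψ_ℓ = 0` for `|x| ≥ 2^ℓ`,
and the BMO norm of `ψ_ℓ` on `ℝ` is at most `16/ℓ`. -/
theorem psi_ell_properties (ℓ : ℕ) (hℓ : 3 ≤ ℓ) (φ : ℕ → ℝ → ℝ)
    (hsmooth : ∀ j, 1 ≤ j → j ≤ ℓ → ContDiff ℝ (⊤ : ℕ∞) (φ j))
    (hsupp : ∀ j, 1 ≤ j → j ≤ ℓ → HasCompactSupport (φ j))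
    (hlb : ∀ j, 1 ≤ j → j ≤ ℓ → ∀ x : ℝ,
      Set.indicator (Set.Icc (-(2 ^ (j - 1) : ℝ)) (2 ^ (j - 1))) 1 x ≤ φ j x)
    (hub : ∀ j, 1 ≤ j → j ≤ ℓ → ∀ x : ℝ,
      φ j x ≤ Set.indicator (Set.Icc (-(2 ^ j : ℝ)) (2 ^ j)) 1 x)
    (ψ : ℝ → ℝ) (hψ : ψ = fun x => (1 / (ℓ : ℝ)) * ∑ j ∈ Finset.Icc 1 ℓ, φ j x) :
    ContDiff ℝ (⊤ : ℕ∞) ψ ∧ (∀ x, 0 ≤ ψ x ∧ ψ x ≤ 1) ∧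
      (∀ x : ℝ, |x| ≤ 1 → ψ x = 1) ∧ (∀ x : ℝ, (2 ^ ℓ : ℝ) ≤ |x| → ψ x = 0) ∧
      (∀ a b : ℝ, a < b →
        ⨍ x in Set.Ioc a b, |ψ x - ⨍ y in Set.Ioc a b, ψ y| ≤ 16 / ℓ) := by
  classical
  have hℓ0 : (0:ℝ) < (ℓ:ℝ) := by positivity
  have hℓne : (ℓ:ℝ) ≠ 0 := ne_of_gt hℓ0
  have hmem : ∀ j ∈ Finset.Icc 1 ℓ, 1 ≤ j ∧ j ≤ ℓ := fun j hj => Finset.mem_Icc.mp hj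
  have hnonneg : ∀ j, 1 ≤ j → j ≤ ℓ → ∀ x, 0 ≤ φ j x := fun j h1 h2 x =>
    le_trans (Set.indicator_nonneg (fun _ _ => zero_le_one) x) (hlb j h1 h2 x)
  have hle_one : ∀ j, 1 ≤ j → j ≤ ℓ → ∀ x, φ j x ≤ 1 := by
    intro j h1 h2 x
    refine le_trans (hub j h1 h2 x) ?_
    by_cases h : x ∈ Set.Icc (-(2 ^ j : ℝ)) (2 ^ j)
    · rw [Set.indicator_of_mem h]; norm_num
    · rw [Set.indicator_of_notMem h]; norm_num
  have hone : ∀ j, 1 ≤ j → j ≤ ℓ → ∀ x : ℝ, |x| ≤ (2:ℝ)^(j-1) → φ j x = 1 := by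
    intro j h1 h2 x hx
    refine le_antisymm (hle_one j h1 h2 x) ?_
    have hmem' : x ∈ Set.Icc (-(2 ^ (j-1) : ℝ)) (2 ^ (j-1)) := by
      rw [Set.mem_Icc]; exact ⟨neg_le_of_abs_le hx, le_of_abs_le hx⟩
    have := hlb j h1 h2 x
    rwa [Set.indicator_of_mem hmem'] at this
  have hzero : ∀ j, 1 ≤ j → j ≤ ℓ → ∀ x : ℝ, (2:ℝ)^j ≤ |x| → φ j x = 0 := by
    intro j h1 h2
    apply zero_of_abs_ge (φ j) (hsmooth j h1 h2).continuous
    intro y hy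
    refine le_antisymm ?_ (hnonneg j h1 h2 y)
    have hmem' : y ∉ Set.Icc (-(2 ^ j : ℝ)) (2 ^ j) := by
      rw [Set.mem_Icc]
      intro ⟨hy1, hy2⟩
      have : |y| ≤ (2:ℝ)^j := abs_le.mpr ⟨hy1, hy2⟩
      linarith
    have := hub j h1 h2 y
    rwa [Set.indicator_of_notMem hmem'] at this
  have hcontD : ContDiff ℝ (⊤ : ℕ∞) ψ := by
    rw [hψ]
    exact contDiff_const.mul (ContDiff.sum fun j hj => hsmooth j (hmem j hj).1 (hmem j hj).2)
  refine ⟨hcontD, ?_, ?_, ?_, ?_⟩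
  · intro x
    rw [hψ]
    simp only
    constructor
    · apply mul_nonneg (by positivity)
      exact Finset.sum_nonneg fun j hj => hnonneg j (hmem j hj).1 (hmem j hj).2 x
    · have hsum : ∑ j ∈ Finset.Icc 1 ℓ, φ j x ≤ (ℓ:ℝ) := by
        calc ∑ j ∈ Finset.Icc 1 ℓ, φ j x ≤ ∑ j ∈ Finset.Icc 1 ℓ, (1:ℝ) :=
              Finset.sum_le_sum fun j hj => hle_one j (hmem j hj).1 (hmem j hj).2 x
          _ = (ℓ:ℝ) := by rw [Finset.sum_const, Nat.card_Icc]; simp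
      rw [div_mul_eq_mul_div, one_mul, div_le_one hℓ0]
      exact hsum
  · intro x hx
    rw [hψ]
    simp only
    have hsum : ∑ j ∈ Finset.Icc 1 ℓ, φ j x = (ℓ:ℝ) := by
      have : ∀ j ∈ Finset.Icc 1 ℓ, φ j x = 1 := by
        intro j hj
        apply hone j (hmem j hj).1 (hmem j hj).2
        calc |x| ≤ 1 := hx
          _ ≤ (2:ℝ)^(j-1) := one_le_pow₀ one_le_two
      rw [Finset.sum_congr rfl this, Finset.sum_const, Nat.card_Icc]; simp
    rw [hsum]; field_simp
  · intro x hx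
    rw [hψ]
    simp only
    have hsum : ∑ j ∈ Finset.Icc 1 ℓ, φ j x = 0 := by
      apply Finset.sum_eq_zero
      intro j hj
      apply hzero j (hmem j hj).1 (hmem j hj).2
      calc (2:ℝ)^j ≤ (2:ℝ)^ℓ := pow_le_pow_right₀ one_le_two (hmem j hj).2
        _ ≤ |x| := hx
    rw [hsum, mul_zero]
  · -- BMO bound
    have hcont : Continuous ψ := hcontD.continuous
    intro a b hab
    set I := Set.Ioc a b with hI
    set L := b - a with hLdef
    have hL : 0 < L := sub_pos.mpr hab
    have hvolI : volume I = ENNReal.ofReal L := Real.volume_Ioc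
    have hvolIR : volume.real I = L := by rw [measureReal_def, hvolI, ENNReal.toReal_ofReal hL.le]
    set M := max |a| |b| with hMdef
    have hM0 : 0 ≤ M := le_trans (abs_nonneg a) (le_max_left _ _)
    have habs : ∀ x ∈ I, |x| ≤ M := by
      intro x hx
      rw [abs_le]
      constructor
      · have : -|a| ≤ a := neg_abs_le a
        have : a ≤ M := le_trans (le_abs_self a) (le_max_left _ _)
        have h2 : -M ≤ -|a| := by
          simp only [neg_le_neg_iff]; exact le_max_left _ _
        linarith [neg_abs_le a, hx.1]
      · exact le_trans hx.2 (le_trans (le_abs_self b) (le_max_right _ _))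
    -- counting function
    set N : ℝ → ℕ := fun x => ((Finset.Icc 1 ℓ).filter (fun j => (2:ℝ)^(j-1) < |x|)).card with hN
    have hNle : ∀ x, N x ≤ ℓ := by
      intro x
      calc N x ≤ (Finset.Icc 1 ℓ).card := Finset.card_filter_le _ _
        _ = ℓ := by rw [Nat.card_Icc]; omega
    have hNmono : ∀ x y : ℝ, |x| ≤ |y| → N x ≤ N y := by
      intro x y h
      apply Finset.card_le_card
      intro j hj
      rw [Finset.mem_filter] at *
      exact ⟨hj.1, lt_of_lt_of_le hj.2 h⟩
    -- sum bounds
    set T : ℝ → ℝ := fun x => ∑ j ∈ Finset.Icc 1 ℓ, φ j x with hT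
    have hTlow : ∀ x, (ℓ:ℝ) - N x ≤ T x := by
      intro x
      have h1 : ∑ j ∈ Finset.Icc 1 ℓ, (if ¬ ((2:ℝ)^(j-1) < |x|) then (1:ℝ) else 0) ≤ T x := by
        apply Finset.sum_le_sum
        intro j hj
        by_cases h : (2:ℝ)^(j-1) < |x|
        · simp only [h, not_true_eq_false, if_false]
          exact hnonneg j (hmem j hj).1 (hmem j hj).2 x
        · simp only [h, not_false_eq_true, if_true]
          exact ge_of_eq (hone j (hmem j hj).1 (hmem j hj).2 x (le_of_not_gt h))
      have h2 : ∑ j ∈ Finset.Icc 1 ℓ, (if ¬ ((2:ℝ)^(j-1) < |x|) then (1:ℝ) else 0)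
          = ((Finset.Icc 1 ℓ).filter (fun j => ¬ ((2:ℝ)^(j-1) < |x|))).card := by
        rw [Finset.sum_boole]
      have h3 : ((Finset.Icc 1 ℓ).filter (fun j => ¬ ((2:ℝ)^(j-1) < |x|))).card + N x = ℓ := by
        rw [hN]
        rw [add_comm]
        rw [Finset.card_filter_add_card_filter_not]
        rw [Nat.card_Icc]; omega
      have h3' : ((Finset.Icc 1 ℓ).filter (fun j => ¬ ((2:ℝ)^(j-1) < |x|))).card = ℓ - N x := by
        omega
      have h4 : (((Finset.Icc 1 ℓ).filter (fun j => ¬ ((2:ℝ)^(j-1) < |x|))).card : ℝ)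
          = (ℓ:ℝ) - N x := by
        rw [h3', Nat.cast_sub (hNle x)]
      calc (ℓ:ℝ) - (N x : ℝ) = _ := h4.symm
        _ = ∑ j ∈ Finset.Icc 1 ℓ, (if ¬ ((2:ℝ)^(j-1) < |x|) then (1:ℝ) else 0) := h2.symm
        _ ≤ T x := h1
    have hTup : ∀ x, T x ≤ (ℓ:ℝ) - N x + 1 := by
      intro x
      set A := (Finset.Icc 1 ℓ).filter (fun j => |x| < (2:ℝ)^j) with hA
      set B := (Finset.Icc 1 ℓ).filter (fun j => (2:ℝ)^(j-1) < |x|) with hB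
      have h1 : T x ≤ (A.card : ℝ) := by
        have : T x ≤ ∑ j ∈ Finset.Icc 1 ℓ, (if |x| < (2:ℝ)^j then (1:ℝ) else 0) := by
          apply Finset.sum_le_sum
          intro j hj
          by_cases h : |x| < (2:ℝ)^j
          · simp only [h, if_true]
            exact hle_one j (hmem j hj).1 (hmem j hj).2 x
          · simp only [h, if_false]
            exact le_of_eq (hzero j (hmem j hj).1 (hmem j hj).2 x (le_of_not_gt h))
        rwa [Finset.sum_boole] at this
      have hcard1 : (A ∩ B).card ≤ 1 := by
        rw [Finset.card_le_one]
        intro u hu v hv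
        rw [Finset.mem_inter, hA, hB, Finset.mem_filter, Finset.mem_filter] at hu hv
        by_contra hne
        rcases lt_or_gt_of_ne hne with h | h
        · have : (2:ℝ)^u ≤ (2:ℝ)^(v-1) := pow_le_pow_right₀ one_le_two (by omega)
          linarith [hu.1.2, hv.2.2]
        · have : (2:ℝ)^v ≤ (2:ℝ)^(u-1) := pow_le_pow_right₀ one_le_two (by omega)
          linarith [hv.1.2, hu.2.2]
      have hcard2 : A.card + B.card ≤ ℓ + 1 := by
        have := Finset.card_union_add_card_inter A B
        have hsub : A ∪ B ⊆ Finset.Icc 1 ℓ := by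
          intro j hj
          rcases Finset.mem_union.mp hj with h | h
          · exact Finset.mem_of_mem_filter j h
          · exact Finset.mem_of_mem_filter j h
        have h5 : (A ∪ B).card ≤ ℓ := by
          calc (A ∪ B).card ≤ (Finset.Icc 1 ℓ).card := Finset.card_le_card hsub
            _ = ℓ := by rw [Nat.card_Icc]; omega
        omega
      have : (A.card : ℝ) ≤ (ℓ:ℝ) - N x + 1 := by
        have hNB : N x = B.card := rfl
        have : (A.card : ℝ) + (N x : ℝ) ≤ (ℓ:ℝ) + 1 := by
          rw [hNB]; exact_mod_cast hcard2
        linarith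
      linarith
    have hψeq : ∀ x, ψ x = (1/(ℓ:ℝ)) * T x := by intro x; rw [hψ]
    -- constant c
    set c : ℝ := (1/(ℓ:ℝ)) * ((ℓ:ℝ) - N M) with hc
    -- the S set and g function
    set S := (Finset.Icc 1 ℓ).filter (fun j => (2:ℝ)^(j-1) < M) with hS
    set g : ℝ → ℝ := fun x => (1/(ℓ:ℝ)) *
        (1 + ∑ j ∈ S, (Set.Icc (-(2:ℝ)^(j-1)) ((2:ℝ)^(j-1))).indicator (fun _ => (1:ℝ)) x) with hg
    have hNM : N M = S.card := by
      simp only [hN, hS, abs_of_nonneg hM0]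
    have hcount : ∀ x, |x| ≤ M →
        ((N M : ℝ) - N x) = ∑ j ∈ S, (Set.Icc (-(2:ℝ)^(j-1)) ((2:ℝ)^(j-1))).indicator (fun _ => (1:ℝ)) x := by
      intro x hx
      have hTS : (Finset.Icc 1 ℓ).filter (fun j => (2:ℝ)^(j-1) < |x|)
          = S.filter (fun j => (2:ℝ)^(j-1) < |x|) := by
        rw [hS, Finset.filter_filter]
        apply Finset.filter_congr
        intro j _
        constructor
        · intro h; exact ⟨lt_of_lt_of_le h hx, h⟩
        · intro h; exact h.2
      have hsplit : (S.filter (fun j => (2:ℝ)^(j-1) < |x|)).card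
          + (S.filter (fun j => ¬ ((2:ℝ)^(j-1) < |x|))).card = S.card :=
        Finset.card_filter_add_card_filter_not _
      have hrhs : ∑ j ∈ S, (Set.Icc (-(2:ℝ)^(j-1)) ((2:ℝ)^(j-1))).indicator (fun _ => (1:ℝ)) x
          = ((S.filter (fun j => ¬ ((2:ℝ)^(j-1) < |x|))).card : ℝ) := by
        rw [← Finset.sum_boole]
        apply Finset.sum_congr rfl
        intro j _
        rw [Set.indicator_apply]
        congr 1
        · rw [eq_iff_iff, Set.mem_Icc, not_lt]
          constructor
          · intro ⟨h1, h2⟩; exact abs_le.mpr ⟨h1, h2⟩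
          · intro h; exact ⟨neg_le_of_abs_le h, le_of_abs_le h⟩
      have hNxeq : N x = (S.filter (fun j => (2:ℝ)^(j-1) < |x|)).card := by
        rw [hN]; simp only; rw [hTS]
      have h6 : (S.filter (fun j => ¬ ((2:ℝ)^(j-1) < |x|))).card = N M - N x := by
        rw [hNM, hNxeq]; omega
      have h7 : N x ≤ N M := by
        rw [hNM, hNxeq]
        exact Finset.card_le_card (Finset.filter_subset_filter _ (fun j hj => hj)) |>.trans
          (le_of_eq rfl) |>.trans (Finset.card_filter_le _ _)
      rw [hrhs, h6, Nat.cast_sub h7]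
    have hNxM : ∀ x ∈ I, N x ≤ N M := by
      intro x hx
      apply hNmono
      rw [abs_of_nonneg hM0]
      exact habs x hx
    -- pointwise bound
    have hpoint : ∀ x ∈ I, |ψ x - c| ≤ g x := by
      intro x hx
      have hNx : (N x : ℝ) ≤ (N M : ℝ) := by exact_mod_cast hNxM x hx
      have key : |T x - ((ℓ:ℝ) - N M)| ≤ 1 + ((N M:ℝ) - N x) := by
        rw [abs_le]
        constructor
        · linarith [hTlow x]
        · linarith [hTup x]
      have heq1 : ψ x - c = (1/(ℓ:ℝ)) * (T x - ((ℓ:ℝ) - N M)) := by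
        rw [hψeq x, hc]; ring
      rw [heq1, abs_mul, abs_of_nonneg (by positivity : (0:ℝ) ≤ 1/(ℓ:ℝ))]
      rw [hg]
      simp only
      rw [← hcount x (habs x hx)]
      apply mul_le_mul_of_nonneg_left key (by positivity)
    -- integrability
    have hInt : IntegrableOn ψ I := hcont.integrableOn_Ioc
    have hIndInt : ∀ j : ℕ, IntegrableOn
        ((Set.Icc (-(2:ℝ)^(j-1)) ((2:ℝ)^(j-1))).indicator (fun _ => (1:ℝ))) I := by
      intro j
      rw [IntegrableOn, integrable_indicator_iff measurableSet_Icc]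
      apply (integrableOn_const_iff enorm_ne_top).mpr
      right
      calc (volume.restrict I) (Set.Icc (-(2:ℝ)^(j-1)) ((2:ℝ)^(j-1)))
          ≤ volume (Set.Icc (-(2:ℝ)^(j-1)) ((2:ℝ)^(j-1))) := Measure.restrict_le_self _
        _ < ⊤ := measure_Icc_lt_top
    have hIntg : IntegrableOn g I := by
      rw [hg]
      apply Integrable.const_mul
      apply Integrable.add ((integrableOn_const_iff enorm_ne_top).mpr (Or.inr (by rw [hvolI]; exact ENNReal.ofReal_lt_top)))
      exact integrable_finset_sum S (fun j _ => hIndInt j)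
    -- integral of g
    have hintg : ∫ x in I, g x ≤ (1/(ℓ:ℝ)) * (6 * L) := by
      have h1 : ∫ x in I, g x = (1/(ℓ:ℝ)) * ∫ x in I,
          (1 + ∑ j ∈ S, (Set.Icc (-(2:ℝ)^(j-1)) ((2:ℝ)^(j-1))).indicator (fun _ => (1:ℝ)) x) := by
        rw [hg]; exact integral_const_mul _ _
      have h2 : ∫ x in I, (1 + ∑ j ∈ S, (Set.Icc (-(2:ℝ)^(j-1)) ((2:ℝ)^(j-1))).indicator (fun _ => (1:ℝ)) x)
          = L + ∑ j ∈ S, (volume (I ∩ Set.Icc (-(2:ℝ)^(j-1)) ((2:ℝ)^(j-1)))).toReal := by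
        rw [integral_add ((integrableOn_const_iff (C := (1:ℝ)) (s := I) (μ := volume) enorm_ne_top).mpr (Or.inr (by rw [hvolI]; exact ENNReal.ofReal_lt_top)))
          (integrable_finset_sum S (fun j _ => hIndInt j))]
        congr 1
        · rw [setIntegral_const, hvolIR, smul_eq_mul, mul_one]
        · rw [integral_finset_sum _ (fun j _ => hIndInt j)]
          apply Finset.sum_congr rfl
          intro j _
          rw [setIntegral_indicator measurableSet_Icc, setIntegral_const, smul_eq_mul, mul_one, measureReal_def]
      have h3 : ∑ j ∈ S, (volume (I ∩ Set.Icc (-(2:ℝ)^(j-1)) ((2:ℝ)^(j-1)))).toReal ≤ 5 * L := by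
        apply sum_meas_le_aux a b M hab hMdef
        intro j hj
        rw [hS, Finset.mem_filter, Finset.mem_Icc] at hj
        exact ⟨hj.1.1, hj.2⟩
      rw [h1, h2]
      have : L + ∑ j ∈ S, (volume (I ∩ Set.Icc (-(2:ℝ)^(j-1)) ((2:ℝ)^(j-1)))).toReal ≤ 6 * L := by
        linarith
      apply mul_le_mul_of_nonneg_left this (by positivity)
    -- integral bound for |ψ - c|
    have hpsic : IntegrableOn (fun x => |ψ x - c|) I :=
      (hInt.sub ((integrableOn_const_iff enorm_ne_top).mpr (Or.inr (by rw [hvolI]; exact ENNReal.ofReal_lt_top)))).abs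
    have hintpsic : ∫ x in I, |ψ x - c| ≤ (1/(ℓ:ℝ)) * (6 * L) := by
      refine le_trans ?_ hintg
      apply setIntegral_mono_on hpsic hIntg measurableSet_Ioc
      exact hpoint
    -- average manipulations
    set A := ⨍ y in I, ψ y with hA
    have hAeq : A = L⁻¹ * ∫ y in I, ψ y := by
      rw [hA, setAverage_eq, hvolIR, smul_eq_mul]
    have hcA : L * |c - A| ≤ ∫ x in I, |ψ x - c| := by
      have h1 : ∫ x in I, (c - ψ x) = L * c - ∫ x in I, ψ x := by
        rw [integral_sub ((integrableOn_const_iff (C := c) (s := I) (μ := volume) enorm_ne_top).mpr (Or.inr (by rw [hvolI]; exact ENNReal.ofReal_lt_top))) hInt]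
        rw [setIntegral_const, hvolIR, smul_eq_mul]
      have h2 : |∫ x in I, (c - ψ x)| ≤ ∫ x in I, |ψ x - c| := by
        calc |∫ x in I, (c - ψ x)| ≤ ∫ x in I, |c - ψ x| := by
              rw [← Real.norm_eq_abs]
              refine le_trans (norm_integral_le_integral_norm _) ?_
              simp [Real.norm_eq_abs]
          _ = ∫ x in I, |ψ x - c| := by
              apply integral_congr_ae
              filter_upwards with x
              exact abs_sub_comm _ _
      have h3 : c - A = L⁻¹ * (L * c - ∫ x in I, ψ x) := by
        rw [hAeq]
        field_simp
      rw [h3, abs_mul, abs_of_nonneg (by positivity : (0:ℝ) ≤ L⁻¹)]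
      rw [← h1]
      rw [← mul_assoc, mul_inv_cancel₀ (ne_of_gt hL), one_mul]
      exact h2
    have hmain : ∫ x in I, |ψ x - A| ≤ 2 * ∫ x in I, |ψ x - c| := by
      have h1 : ∫ x in I, |ψ x - A| ≤ ∫ x in I, (|ψ x - c| + |c - A|) := by
        apply setIntegral_mono_on
        · exact (hInt.sub ((integrableOn_const_iff enorm_ne_top).mpr (Or.inr (by rw [hvolI]; exact ENNReal.ofReal_lt_top)))).abs
        · exact hpsic.add ((integrableOn_const_iff enorm_ne_top).mpr (Or.inr (by rw [hvolI]; exact ENNReal.ofReal_lt_top)))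
        · exact measurableSet_Ioc
        · intro x _
          calc |ψ x - A| = |(ψ x - c) + (c - A)| := by rw [sub_add_sub_cancel]
            _ ≤ |ψ x - c| + |c - A| := abs_add_le _ _
      have h2 : ∫ x in I, (|ψ x - c| + |c - A|) = (∫ x in I, |ψ x - c|) + L * |c - A| := by
        rw [integral_add hpsic ((integrableOn_const_iff enorm_ne_top).mpr (Or.inr (by rw [hvolI]; exact ENNReal.ofReal_lt_top)))]
        rw [setIntegral_const, hvolIR, smul_eq_mul]
      linarith
    -- conclude
    rw [setAverage_eq, hvolIR, smul_eq_mul]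
    have hfinal : ∫ x in I, |ψ x - A| ≤ 12 * L / ℓ := by
      calc ∫ x in I, |ψ x - A| ≤ 2 * ∫ x in I, |ψ x - c| := hmain
        _ ≤ 2 * ((1/(ℓ:ℝ)) * (6 * L)) := by linarith
        _ = 12 * L / ℓ := by ring
    calc L⁻¹ * ∫ x in I, |ψ x - A| ≤ L⁻¹ * (12 * L / ℓ) := by
          apply mul_le_mul_of_nonneg_left hfinal (by positivity)
      _ = 12 / ℓ := by field_simp
      _ ≤ 16 / ℓ := by
          have hinv : (0:ℝ) ≤ (ℓ:ℝ)⁻¹ := by positivity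
          rw [div_eq_mul_inv, div_eq_mul_inv]
          nlinarith
end

section
/- Let (X,d,μ) be a space of homogeneous type with μ(X) = ∞, fix x₀ ∈ X and S > 0 with μ(B(x₀,S)) > 0. With K₀ = 2K and A₀ > 1 such that μ(B(x₀, K₀r)) ≤ A₀μ(B(x₀,r)) for all r > 0, choose λ_k ∈ ℕ so that A₀^k a₀ ≤ μ(B(x₀, K₀^{λ_k} S)) < A₀^{k+1} a₀ where a₀ = μ(B(x₀,S)). Then f_j := ∑_{k=0}^j 𝟙_{B(x₀, K₀^{λ_k}S)} satisfies ‖f_j‖_{BMO(X)} ≤ c₀ with c₀ depending only on A and K (uniformly in j). -/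
/-!
Fix a ball `B = B(x,r)` and let `c` be the number of balls `B_k = B(x₀, R_k)`,
`R_k = (2K)^λ_k S`, `k ≤ j`, that contain `B`. On `B`, `f_j - c` counts the balls `B_k` that
meet `B` without containing it, and the mean oscillation of `f_j` on `B` is at most twice the
mean of `|f_j - c|`, so it suffices to bound `∑ μ(B_k ∩ B)` over these crossing indices by a
multiple of `μ(B)`.

Let `m ≤ T` be the smallest and the largest crossing index. A point of `B ∩ B_m` and a point of
`B \ B_T` give `R_T < K (R_m + 2 K r)`. If `R_m ≥ 4 K r`, then `B_T ⊆ B(x₀, 2K R_m)`, hence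
`μ(B_T) ≤ A₀ μ(B_m)`, and the geometric growth `A₀^k a₀ ≤ μ(B_k) < A₀^(k+1) a₀` forces
`T ≤ m + 1`: at most two balls cross `B`, each contributing at most `μ(B)`. Otherwise
`B_T ⊆ B(x, (2K)^4 r)`, so `μ(B_T) ≤ A^n μ(B)` by doubling (with `2^n > (2K)^4`), and geometric
growth bounds the whole sum `∑_{k ≤ T} μ(B_k)` by `A₀² / (A₀ - 1) · μ(B_T)`.
-/

open MeasureTheory Finset
open scoped ENNReal

section Oscillation

variable {α : Type*} [MeasurableSpace α]

theorem integral_abs_sub_average_le {ν : Measure α} [IsFiniteMeasure ν] {f : α → ℝ}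
    (hf : Integrable f ν) (c : ℝ) :
    ∫ x, |f x - ⨍ a, f a ∂ν| ∂ν ≤ 2 * ∫ x, |f x - c| ∂ν := by
  set I := ⨍ a, f a ∂ν
  have hfc : Integrable (fun x => |f x - c|) ν := (hf.sub (integrable_const c)).abs
  have hshift : ∫ _, (c - I) ∂ν = ∫ x, (c - f x) ∂ν := by
    have h := integral_sub_average ν f
    rw [integral_sub hf (integrable_const I)] at h
    rw [integral_sub (integrable_const c) (integrable_const I),
      integral_sub (integrable_const c) hf]
    linarith
  have hconst : ∫ _, |c - I| ∂ν ≤ ∫ x, |f x - c| ∂ν :=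
    calc ∫ _, |c - I| ∂ν = |∫ _, (c - I) ∂ν| := by
          simp only [integral_const, smul_eq_mul, abs_mul, abs_of_nonneg measureReal_nonneg]
      _ = |∫ x, (c - f x) ∂ν| := by rw [hshift]
      _ ≤ ∫ x, |c - f x| ∂ν := abs_integral_le_integral_abs
      _ = ∫ x, |f x - c| ∂ν := by simp only [abs_sub_comm]
  calc ∫ x, |f x - I| ∂ν ≤ ∫ x, (|f x - c| + |c - I|) ∂ν :=
        integral_mono (hf.sub (integrable_const I)).abs (hfc.add (integrable_const _))
          fun x => abs_sub_le (f x) c I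
    _ = ∫ x, |f x - c| ∂ν + ∫ _, |c - I| ∂ν := integral_add hfc (integrable_const _)
    _ ≤ 2 * ∫ x, |f x - c| ∂ν := by linarith

theorem average_abs_sub_average_le {ν : Measure α} [IsFiniteMeasure ν] {f : α → ℝ}
    (hf : Integrable f ν) (c : ℝ) :
    ⨍ x, |f x - ⨍ a, f a ∂ν| ∂ν ≤ 2 * ⨍ x, |f x - c| ∂ν := by
  rw [average_eq ν fun x => |f x - ⨍ a, f a ∂ν|, average_eq ν fun x => |f x - c|, smul_eq_mul,
    smul_eq_mul, mul_left_comm]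
  exact mul_le_mul_of_nonneg_left (integral_abs_sub_average_le hf c)
    (inv_nonneg.2 measureReal_nonneg)

theorem setAverage_le_of_setLIntegral_le {μ : Measure α} {B : Set α} (hB : μ B ≠ ∞)
    {g : α → ℝ} (hg : 0 ≤ g) {C : ℝ} (hC : 0 ≤ C)
    (h : ∫⁻ y in B, ENNReal.ofReal (g y) ∂μ ≤ ENNReal.ofReal C * μ B) :
    ⨍ y in B, g y ∂μ ≤ C := by
  have hint : ∫ y in B, g y ∂μ ≤ C * μ.real B := by
    rw [← ENNReal.ofReal_le_ofReal_iff (by positivity), ENNReal.ofReal_mul hC,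
      ofReal_measureReal hB]
    calc ENNReal.ofReal (∫ y in B, g y ∂μ) = ‖∫ y in B, g y ∂μ‖ₑ :=
          (Real.enorm_of_nonneg (integral_nonneg hg)).symm
      _ ≤ ∫⁻ y in B, ‖g y‖ₑ ∂μ := enorm_integral_le_lintegral_enorm _
      _ = ∫⁻ y in B, ENNReal.ofReal (g y) ∂μ := by simp only [Real.enorm_of_nonneg (hg _)]
      _ ≤ _ := h
  rw [setAverage_eq, smul_eq_mul]
  rcases (measureReal_nonneg (μ := μ) (s := B)).eq_or_lt with h0 | hpos
  · simp [← h0, hC]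
  · rw [inv_mul_le_iff₀ hpos]
    linarith

theorem setAverage_abs_sub_setAverage_le {μ : Measure α} {B : Set α} (hB : μ B ≠ ∞)
    {f : α → ℝ} (hf : 0 ≤ f) {c C : ℝ} (hC : 0 ≤ C)
    (h : ∫⁻ y in B, ENNReal.ofReal |f y - c| ∂μ ≤ ENNReal.ofReal C * μ B) :
    ⨍ y in B, |f y - ⨍ z in B, f z ∂μ| ∂μ ≤ 2 * C := by
  by_cases hfi : IntegrableOn f B μ
  · have : IsFiniteMeasure (μ.restrict B) := isFiniteMeasure_restrict.2 hB
    calc ⨍ y in B, |f y - ⨍ z in B, f z ∂μ| ∂μ ≤ 2 * ⨍ y in B, |f y - c| ∂μ :=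
          average_abs_sub_average_le hfi c
      _ ≤ 2 * C := by
          gcongr
          exact setAverage_le_of_setLIntegral_le hB (fun y => abs_nonneg _) hC h
  -- both averages are the junk value `0`, since `|f - 0| = f` is not integrable either
  · have hzero : ⨍ z in B, f z ∂μ = 0 := by
      rw [setAverage_eq, integral_undef hfi, smul_zero]
    simp only [hzero, sub_zero, abs_of_nonneg (hf _)]
    positivity

end Oscillation

section QuasiMetric

variable {X : Type*}

structure IsQuasiMetric (d : X → X → ℝ) (K : ℝ) : Prop where
  symm : ∀ x y, d x y = d y x
  le_mul_add : ∀ x y z, d x y ≤ K * (d x z + d z y)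

namespace IsQuasiMetric

variable {d : X → X → ℝ} {K : ℝ}

theorem setOf_lt_subset (hd : IsQuasiMetric d K) (hK : 0 < K) {a b y : X} {s t t' : ℝ}
    (hay : d a y < s) (hby : d b y < t) :
    {w | d b w < t'} ⊆ {w | d a w < K * (s + K * (t + t'))} := by
  intro w (hbw : d b w < t')
  have hyw : d y w < K * (t + t') :=
    calc d y w ≤ K * (d y b + d b w) := hd.le_mul_add y w b
      _ < K * (t + t') := by
        rw [hd.symm y b]
        exact mul_lt_mul_of_pos_left (add_lt_add hby hbw) hK
  calc d a w ≤ K * (d a y + d y w) := hd.le_mul_add a w y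
    _ < K * (s + K * (t + t')) := mul_lt_mul_of_pos_left (add_lt_add hay hyw) hK

theorem setOf_lt_subset_two_pow (hd : IsQuasiMetric d K) (hK : 1 ≤ K) {x x₀ y : X}
    {r R R' : ℝ} (hr : 0 < r) (hxy : d x y < r) (hx₀y : d x₀ y < R) (hR : R < 4 * K * r)
    (hR' : R' < K * (R + K * (r + r))) {n : ℕ} (hn : (2 * K) ^ 4 < 2 ^ n) :
    {w | d x₀ w < R'} ⊆ {w | d x w < 2 ^ n * r} := by
  have hK0 : 0 < K := by linarith
  refine (hd.setOf_lt_subset hK0 hxy hx₀y).trans fun w (hw : d x w < _) => ?_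
  have hR'r : R' < 6 * K ^ 2 * r := by nlinarith
  have hK3 : K ^ 3 ≤ K ^ 4 := pow_le_pow_right₀ hK (by norm_num)
  have hK1 : K ≤ K ^ 4 := le_self_pow₀ hK (by norm_num)
  calc d x w < K * (r + K * (R + R')) := hw
    _ ≤ K * (r + K * (4 * K * r + 6 * K ^ 2 * r)) := by gcongr
    _ = (K + 4 * K ^ 3 + 6 * K ^ 4) * r := by ring
    _ ≤ (2 * K) ^ 4 * r := by gcongr; nlinarith
    _ < 2 ^ n * r := by gcongr

end IsQuasiMetric

end QuasiMetric

theorem measure_two_pow_mul_le {X : Type*} [MeasurableSpace X] {μ : Measure X}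
    {E : ℝ → Set X} {c : ℝ≥0∞} (hE : ∀ r, 0 < r → μ (E (2 * r)) ≤ c * μ (E r))
    (n : ℕ) {r : ℝ} (hr : 0 < r) : μ (E (2 ^ n * r)) ≤ c ^ n * μ (E r) := by
  induction n generalizing r with
  | zero => simp
  | succ n ih =>
    calc μ (E (2 ^ (n + 1) * r)) = μ (E (2 ^ n * (2 * r))) := by ring_nf
      _ ≤ c ^ n * μ (E (2 * r)) := ih (by positivity)
      _ ≤ c ^ n * (c * μ (E r)) := by gcongr; exact hE r hr
      _ = c ^ (n + 1) * μ (E r) := by ring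

theorem geom_sum_pow_succ_le {A₀ : ℝ} (hA₀ : 1 < A₀) (T : ℕ) :
    ∑ k ∈ range (T + 1), A₀ ^ (k + 1) ≤ A₀ ^ 2 / (A₀ - 1) * A₀ ^ T := by
  have hA₀0 : 0 < A₀ := by linarith
  have hA₀1 : 0 < A₀ - 1 := by linarith
  have hsum : ∑ k ∈ range (T + 1), A₀ ^ (k + 1) = A₀ * ((A₀ ^ (T + 1) - 1) / (A₀ - 1)) := by
    rw [← geom_sum_eq hA₀.ne', mul_sum]
    exact sum_congr rfl fun k _ => pow_succ' A₀ k
  rw [hsum, div_mul_eq_mul_div, mul_div_assoc', div_le_div_iff_of_pos_right hA₀1]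
  nlinarith [pow_succ' A₀ T, pow_pos hA₀0 T]

section GeometricScale

variable {X : Type*} [MeasurableSpace X]

structure IsGeometricMeasureScale (μ : Measure X) (E : ℕ → Set X) (a : ℝ≥0∞) (A₀ : ℝ) :
    Prop where
  pow_mul_le : ∀ k, ENNReal.ofReal (A₀ ^ k) * a ≤ μ (E k)
  lt_pow_succ_mul : ∀ k, μ (E k) < ENNReal.ofReal (A₀ ^ (k + 1)) * a

namespace IsGeometricMeasureScale

variable {μ : Measure X} {E : ℕ → Set X} {a : ℝ≥0∞} {A₀ : ℝ}

theorem le_add_one (hE : IsGeometricMeasureScale μ E a A₀) (ha0 : a ≠ 0) (hat : a ≠ ∞)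
    (hA₀ : 1 < A₀) {m T : ℕ} (h : μ (E T) ≤ ENNReal.ofReal A₀ * μ (E m)) : T ≤ m + 1 := by
  have hA₀0 : 0 < A₀ := by linarith
  have hlt : ENNReal.ofReal (A₀ ^ T) * a < ENNReal.ofReal (A₀ ^ (m + 2)) * a :=
    calc ENNReal.ofReal (A₀ ^ T) * a ≤ ENNReal.ofReal A₀ * μ (E m) := (hE.pow_mul_le T).trans h
      _ < ENNReal.ofReal A₀ * (ENNReal.ofReal (A₀ ^ (m + 1)) * a) :=
        ENNReal.mul_lt_mul_right (by positivity) ENNReal.ofReal_ne_top (hE.lt_pow_succ_mul m)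
      _ = ENNReal.ofReal (A₀ ^ (m + 2)) * a := by
        rw [← mul_assoc, ← ENNReal.ofReal_mul hA₀0.le, pow_succ' A₀ (m + 1)]
  have hpow : A₀ ^ T < A₀ ^ (m + 2) :=
    (ENNReal.ofReal_lt_ofReal_iff (by positivity)).1 ((ENNReal.mul_lt_mul_iff_left ha0 hat).1 hlt)
  have := (pow_lt_pow_iff_right₀ hA₀).1 hpow
  omega

theorem sum_measure_le (hE : IsGeometricMeasureScale μ E a A₀) (hA₀ : 1 < A₀) {Q : Finset ℕ}
    {T : ℕ} (hQ : ∀ k ∈ Q, k ≤ T) :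
    ∑ k ∈ Q, μ (E k) ≤ ENNReal.ofReal (A₀ ^ 2 / (A₀ - 1)) * μ (E T) := by
  have hA₀0 : 0 ≤ A₀ := by linarith
  calc ∑ k ∈ Q, μ (E k) ≤ ∑ k ∈ range (T + 1), μ (E k) :=
        sum_le_sum_of_subset fun k hk => mem_range.2 (Nat.lt_succ_of_le (hQ k hk))
    _ ≤ ∑ k ∈ range (T + 1), ENNReal.ofReal (A₀ ^ (k + 1)) * a :=
        sum_le_sum fun k _ => (hE.lt_pow_succ_mul k).le
    _ = ENNReal.ofReal (∑ k ∈ range (T + 1), A₀ ^ (k + 1)) * a := by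
        rw [← sum_mul, ENNReal.ofReal_sum_of_nonneg fun k _ => by positivity]
    _ ≤ ENNReal.ofReal (A₀ ^ 2 / (A₀ - 1) * A₀ ^ T) * a := by
        gcongr; exact geom_sum_pow_succ_le hA₀ T
    _ = ENNReal.ofReal (A₀ ^ 2 / (A₀ - 1)) * (ENNReal.ofReal (A₀ ^ T) * a) := by
        rw [ENNReal.ofReal_mul (div_nonneg (by positivity) (by linarith)), mul_assoc]
    _ ≤ ENNReal.ofReal (A₀ ^ 2 / (A₀ - 1)) * μ (E T) := mul_le_mul_right (hE.pow_mul_le T) _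

end IsGeometricMeasureScale

end GeometricScale

section Crossing

variable {X ι : Type*}

open Classical in
noncomputable def crossingIndices (E : ι → Set X) (B : Set X) (I : Finset ι) : Finset ι :=
  {k ∈ I | ¬ B ⊆ E k ∧ (B ∩ E k).Nonempty}

theorem mem_crossingIndices {E : ι → Set X} {B : Set X} {I : Finset ι} {k : ι} :
    k ∈ crossingIndices E B I ↔ k ∈ I ∧ ¬ B ⊆ E k ∧ (B ∩ E k).Nonempty := by
  classical
  simp [crossingIndices]

open Classical in
theorem sum_indicator_eq_card_add_sum_crossingIndices (E : ι → Set X) {B : Set X}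
    (I : Finset ι) {y : X} (hy : y ∈ B) :
    ∑ k ∈ I, (E k).indicator (fun _ => (1 : ℝ)) y =
      #{k ∈ I | B ⊆ E k} + ∑ k ∈ crossingIndices E B I, (E k).indicator (fun _ => (1 : ℝ)) y := by
  rw [← sum_filter_add_sum_filter_not I (fun k => B ⊆ E k)]
  congr 1
  · have hone : ∀ k ∈ {k ∈ I | B ⊆ E k}, (E k).indicator (fun _ => (1 : ℝ)) y = 1 :=
      fun k hk => Set.indicator_of_mem ((mem_filter.1 hk).2 hy) _
    simp [sum_congr rfl hone]
  · rw [crossingIndices, ← filter_filter]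
    refine (sum_filter_of_ne fun k _ hk => ⟨y, hy, ?_⟩).symm
    by_contra hyk
    exact hk (Set.indicator_of_notMem hyk _)

open Classical in
theorem setLIntegral_abs_sum_indicator_sub_card_le [MeasurableSpace X] (μ : Measure X)
    (E : ι → Set X) (B : Set X) (I : Finset ι) :
    ∫⁻ y in B, ENNReal.ofReal
        |∑ k ∈ I, (E k).indicator (fun _ => (1 : ℝ)) y - #{k ∈ I | B ⊆ E k}| ∂μ ≤
      ∑ k ∈ crossingIndices E B I, μ (E k ∩ B) := by
  -- neither `E k` nor `B` need be measurable, so we majorize by indicators of measurable hulls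
  set F : ι → Set X := fun k => toMeasurable μ (E k ∩ B)
  have hF : ∀ k, MeasurableSet (F k) := fun k => measurableSet_toMeasurable _ _
  have hpt : ∀ y ∈ B, ENNReal.ofReal
      |∑ k ∈ I, (E k).indicator (fun _ => (1 : ℝ)) y - #{k ∈ I | B ⊆ E k}| ≤
      ∑ k ∈ crossingIndices E B I, (F k).indicator 1 y := by
    intro y hy
    rw [sum_indicator_eq_card_add_sum_crossingIndices E I hy, add_sub_cancel_left,
      abs_of_nonneg (sum_nonneg fun k _ => Set.indicator_nonneg (fun _ _ => zero_le_one) _),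
      ENNReal.ofReal_sum_of_nonneg fun k _ => Set.indicator_nonneg (fun _ _ => zero_le_one) _]
    refine sum_le_sum fun k _ => ?_
    by_cases hyk : y ∈ E k
    · have hyF : y ∈ F k := subset_toMeasurable μ _ ⟨hyk, hy⟩
      simp [Set.indicator_of_mem hyk, Set.indicator_of_mem hyF]
    · simp [Set.indicator_of_notMem hyk]
  calc _ ≤ ∫⁻ y in B, ∑ k ∈ crossingIndices E B I, (F k).indicator 1 y ∂μ :=
        setLIntegral_mono (Finset.measurable_sum _ fun k _ => measurable_one.indicator (hF k)) hpt
    _ = ∑ k ∈ crossingIndices E B I, μ.restrict B (F k) := by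
        rw [lintegral_finsetSum _ fun k _ => measurable_one.indicator (hF k)]
        simp only [Pi.one_def, lintegral_indicator_const (hF _), one_mul]
    _ ≤ ∑ k ∈ crossingIndices E B I, μ (E k ∩ B) :=
        sum_le_sum fun k _ => (Measure.restrict_le_self _).trans (measure_toMeasurable _).le

end Crossing

theorem card_le_two_of_max'_le_min'_add_one {Q : Finset ℕ} (hQ : Q.Nonempty)
    (h : Q.max' hQ ≤ Q.min' hQ + 1) : #Q ≤ 2 :=
  calc #Q ≤ #(Icc (Q.min' hQ) (Q.min' hQ + 1)) :=
        card_le_card fun k hk => mem_Icc.2 ⟨Q.min'_le k hk, (Q.le_max' k hk).trans h⟩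
    _ = 2 := by rw [Nat.card_Icc]; omega

theorem sum_measure_crossingIndices_le {X : Type*} [MeasurableSpace X] {μ : Measure X}
    {d : X → X → ℝ} {K : ℝ} (hd : IsQuasiMetric d K) (hK : 1 ≤ K) {x₀ : X} {R : ℕ → ℝ}
    (hR : ∀ k, 0 < R k) {a : ℝ≥0∞} (ha0 : a ≠ 0) (hat : a ≠ ∞) {A₀ : ℝ} (hA₀ : 1 < A₀)
    (hdb₀ : ∀ r, 0 < r → μ {y | d x₀ y < 2 * K * r} ≤ ENNReal.ofReal A₀ * μ {y | d x₀ y < r})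
    (hE : IsGeometricMeasureScale μ (fun k => {y | d x₀ y < R k}) a A₀)
    {x : X} {A : ℝ} (hA : 0 ≤ A)
    (hdb : ∀ r, 0 < r → μ {y | d x y < 2 * r} ≤ ENNReal.ofReal A * μ {y | d x y < r})
    {n : ℕ} (hn : (2 * K) ^ 4 < 2 ^ n) {r : ℝ} (hr : 0 < r) (I : Finset ℕ) :
    ∑ k ∈ crossingIndices (fun k => {y | d x₀ y < R k}) {y | d x y < r} I,
        μ ({y | d x₀ y < R k} ∩ {y | d x y < r}) ≤
      ENNReal.ofReal (max 2 (A₀ ^ 2 / (A₀ - 1) * A ^ n)) * μ {y | d x y < r} := by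
  have hK0 : 0 < K := by linarith
  set B := {y | d x y < r}
  set E : ℕ → Set X := fun k => {y | d x₀ y < R k}
  set Q := crossingIndices E B I
  rcases Q.eq_empty_or_nonempty with hQ | hQ
  · simp [hQ]
  set m := Q.min' hQ
  set T := Q.max' hQ
  obtain ⟨y₀, hy₀B, hy₀m⟩ := (mem_crossingIndices.1 (Q.min'_mem hQ)).2.2
  obtain ⟨z, hzB, hzT⟩ := Set.not_subset.1 (mem_crossingIndices.1 (Q.max'_mem hQ)).2.1
  have hRT : R T < K * (R m + K * (r + r)) :=
    (not_lt.1 hzT).trans_lt (hd.setOf_lt_subset hK0 hy₀m hy₀B hzB)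
  rcases le_or_gt (4 * K * r) (R m) with hfar | hnear
  · have hTm : T ≤ m + 1 := hE.le_add_one ha0 hat hA₀ <|
      calc μ (E T) ≤ μ {y | d x₀ y < 2 * K * R m} := by
            refine measure_mono fun w (hw : d x₀ w < R T) => ?_
            show d x₀ w < 2 * K * R m
            have : 0 < K * K * r := by positivity
            nlinarith [mul_le_mul_of_nonneg_left hfar hK0.le]
        _ ≤ ENNReal.ofReal A₀ * μ (E m) := hdb₀ _ (hR m)
    calc ∑ k ∈ Q, μ (E k ∩ B) ≤ #Q • μ B :=
          sum_le_card_nsmul _ _ _ fun k _ => measure_mono Set.inter_subset_right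
      _ ≤ 2 • μ B := by gcongr; exact card_le_two_of_max'_le_min'_add_one hQ hTm
      _ ≤ _ := by
          rw [two_nsmul, ← two_mul, ← ENNReal.ofReal_ofNat 2]
          gcongr
          exact le_max_left _ _
  · have hET : μ (E T) ≤ ENNReal.ofReal (A ^ n) * μ B :=
      calc μ (E T) ≤ μ {y | d x y < 2 ^ n * r} :=
            measure_mono (hd.setOf_lt_subset_two_pow hK hr hy₀B hy₀m hnear hRT hn)
        _ ≤ ENNReal.ofReal A ^ n * μ B :=
            measure_two_pow_mul_le (E := fun r => {y | d x y < r}) hdb n hr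
        _ = ENNReal.ofReal (A ^ n) * μ B := by rw [ENNReal.ofReal_pow hA]
    calc ∑ k ∈ Q, μ (E k ∩ B) ≤ ∑ k ∈ Q, μ (E k) :=
          sum_le_sum fun k _ => measure_mono Set.inter_subset_left
      _ ≤ ENNReal.ofReal (A₀ ^ 2 / (A₀ - 1)) * (ENNReal.ofReal (A ^ n) * μ B) :=
          (hE.sum_measure_le hA₀ fun k hk => Q.le_max' k hk).trans (mul_le_mul_right hET _)
      _ = ENNReal.ofReal (A₀ ^ 2 / (A₀ - 1) * A ^ n) * μ B := by
          rw [ENNReal.ofReal_mul (div_nonneg (by positivity) (by linarith)), mul_assoc]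
      _ ≤ _ := by gcongr; exact le_max_right _ _

theorem bmo_indicator_sum_bound_general {X : Type*} [MeasurableSpace X] (d : X → X → ℝ)
    (μ : Measure X) (K A : ℝ) (hK : 1 ≤ K) (hA : 1 ≤ A)
    (hsymm : ∀ x y, d x y = d y x)
    (htri : ∀ x y z, d x y ≤ K * (d x z + d z y))
    (hball : ∀ (x : X) (r : ℝ), 0 < r →
      0 < μ {y | d x y < r} ∧ μ {y | d x y < r} < ⊤)
    (hdoubling : ∀ (x : X) (r : ℝ), 0 < r →
      μ {y | d x y < 2 * r} ≤ ENNReal.ofReal A * μ {y | d x y < r})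
    (x₀ : X) (S : ℝ) (hS : 0 < S) (ha₀ : 0 < μ {y | d x₀ y < S})
    (A₀ : ℝ) (hA₀ : 1 < A₀)
    (hdb₀ : ∀ r : ℝ, 0 < r →
      μ {y | d x₀ y < (2 * K) * r} ≤ ENNReal.ofReal A₀ * μ {y | d x₀ y < r})
    (lam : ℕ → ℕ)
    (hlam : ∀ k : ℕ,
      ENNReal.ofReal (A₀ ^ k) * μ {y | d x₀ y < S} ≤
          μ {y | d x₀ y < (2 * K) ^ lam k * S} ∧
        μ {y | d x₀ y < (2 * K) ^ lam k * S} <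
          ENNReal.ofReal (A₀ ^ (k + 1)) * μ {y | d x₀ y < S}) :
    ∃ c₀ : ℝ, 0 < c₀ ∧ ∀ (j : ℕ) (x : X) (r : ℝ), 0 < r →
      ⨍ y in {y | d x y < r},
          |(∑ k ∈ Finset.range (j + 1),
              Set.indicator {z | d x₀ z < (2 * K) ^ lam k * S} (fun _ => (1 : ℝ)) y) -
            ⨍ z in {z | d x z < r},
              (∑ k ∈ Finset.range (j + 1),
                Set.indicator {w | d x₀ w < (2 * K) ^ lam k * S} (fun _ => (1 : ℝ)) z) ∂μ| ∂μ ≤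
        c₀ := by
  obtain ⟨n, hn⟩ : ∃ n : ℕ, (2 * K) ^ 4 < 2 ^ n := pow_unbounded_of_one_lt _ one_lt_two
  set C := max 2 (A₀ ^ 2 / (A₀ - 1) * A ^ n)
  have hC : 0 ≤ C := zero_le_two.trans (le_max_left _ _)
  have hE : IsGeometricMeasureScale μ (fun k => {y | d x₀ y < (2 * K) ^ lam k * S})
      (μ {y | d x₀ y < S}) A₀ := ⟨fun k => (hlam k).1, fun k => (hlam k).2⟩
  refine ⟨2 * C, by positivity, fun j x r hr => ?_⟩
  refine setAverage_abs_sub_setAverage_le (hball x r hr).2.ne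
    (fun y => sum_nonneg fun k _ => Set.indicator_nonneg (fun _ _ => zero_le_one) _) hC
    ((setLIntegral_abs_sum_indicator_sub_card_le μ _ _ _).trans ?_)
  exact sum_measure_crossingIndices_le ⟨hsymm, htri⟩ hK (fun k => by positivity) ha₀.ne'
      (hball x₀ S hS).2.ne hA₀ hdb₀ hE (by linarith) (hdoubling x) hn hr _

/-- Lemma 6.4: on a space of homogeneous type with `μ(X) = ∞`, with `K₀ = 2K`, `A₀ > 1`
satisfying `μ(B(x₀,K₀ r)) ≤ A₀ μ(B(x₀,r))`, and `λ_k` chosen so that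
`A₀^k a₀ ≤ μ(B(x₀, K₀^{λ_k} S)) < A₀^{k+1} a₀` (with `λ₀ = 0`, `a₀ = μ(B(x₀,S)) > 0`),
the functions `f_j = ∑_{k=0}^j 𝟙_{B(x₀,K₀^{λ_k} S)}` have BMO norms bounded by a constant `c₀`
uniformly in `j`. -/
theorem bmo_indicator_sum_bound {X : Type*} [MeasurableSpace X] (d : X → X → ℝ)
    (μ : Measure X) (K A : ℝ) (hK : 1 ≤ K) (hA : 1 ≤ A)
    (hsymm : ∀ x y, d x y = d y x)
    (hpos : ∀ x y, 0 < d x y ↔ x ≠ y)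
    (hself : ∀ x, d x x = 0)
    (htri : ∀ x y z, d x y ≤ K * (d x z + d z y))
    (hball : ∀ (x : X) (r : ℝ), 0 < r →
      0 < μ {y | d x y < r} ∧ μ {y | d x y < r} < ⊤)
    (hdoubling : ∀ (x : X) (r : ℝ), 0 < r →
      μ {y | d x y < 2 * r} ≤ ENNReal.ofReal A * μ {y | d x y < r})
    (hinf : μ Set.univ = ⊤)
    (x₀ : X) (S : ℝ) (hS : 0 < S) (ha₀ : 0 < μ {y | d x₀ y < S})
    (A₀ : ℝ) (hA₀ : 1 < A₀)
    (hdb₀ : ∀ r : ℝ, 0 < r →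
      μ {y | d x₀ y < (2 * K) * r} ≤ ENNReal.ofReal A₀ * μ {y | d x₀ y < r})
    (lam : ℕ → ℕ) (hlam0 : lam 0 = 0)
    (hlam : ∀ k : ℕ,
      ENNReal.ofReal (A₀ ^ k) * μ {y | d x₀ y < S} ≤
          μ {y | d x₀ y < (2 * K) ^ lam k * S} ∧
        μ {y | d x₀ y < (2 * K) ^ lam k * S} <
          ENNReal.ofReal (A₀ ^ (k + 1)) * μ {y | d x₀ y < S}) :
    ∃ c₀ : ℝ, 0 < c₀ ∧ ∀ (j : ℕ) (x : X) (r : ℝ), 0 < r →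
      ⨍ y in {y | d x y < r},
          |(∑ k ∈ Finset.range (j + 1),
              Set.indicator {z | d x₀ z < (2 * K) ^ lam k * S} (fun _ => (1 : ℝ)) y) -
            ⨍ z in {z | d x z < r},
              (∑ k ∈ Finset.range (j + 1),
                Set.indicator {w | d x₀ w < (2 * K) ^ lam k * S} (fun _ => (1 : ℝ)) z) ∂μ| ∂μ ≤
        c₀ :=
  bmo_indicator_sum_bound_general d μ K A hK hA hsymm htri hball hdoubling x₀ S hS ha₀ A₀ hA₀ hdb₀
    lam hlam
end

section
/- Fix 1 ≤ i ≤ n and a cube Q in ℝ^n with center x₀ and side length ℓ(Q). Let 0 < A₁ < 1/2. If y ∈ ℝ^n satisfies (y_i − (x₀)_i)/|y − x₀| > 2A₁ and |y − x₀| > √n(2/A₁ + 1)ℓ(Q), then for every z ∈ Q it holds that (y_i − z_i)/|y − z| ≥ A₁. -/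
/-!
Write `r = ‖y - x₀‖` and `d = √n ℓ/2`, so that the cube lies in the closed ball of radius `d`
about `x₀`. Moving the base point from `x₀` to `z` changes the `i`-th coordinate of `y - ·` by at
most `d` and its length by at most `d`, so the ratio stays above
`(2 A₁ r - d) / (r + d)`, which is at least `A₁` as soon as `(1 + A₁) d ≤ A₁ r`; the size
condition on `r` gives this with room to spare.
-/

open Metric

theorem EuclideanSpace.norm_le_sqrt_card_mul {𝕜 ι : Type*} [RCLike 𝕜] [Fintype ι]
    {v : EuclideanSpace 𝕜 ι} {c : ℝ} (hv : ∀ j, ‖v j‖ ≤ c) :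
    ‖v‖ ≤ √(Fintype.card ι) * c := by
  cases isEmpty_or_nonempty ι
  · simp [EuclideanSpace.norm_eq]
  have hc : 0 ≤ c := (norm_nonneg _).trans (hv (Classical.arbitrary ι))
  calc ‖v‖ = √(∑ j, ‖v j‖ ^ 2) := EuclideanSpace.norm_eq v
    _ ≤ √(∑ _j : ι, c ^ 2) := by gcongr with j; exact hv j
    _ = √(Fintype.card ι) * c := by
      rw [Finset.sum_const, Finset.card_univ, nsmul_eq_mul, Real.sqrt_mul (by positivity),
        Real.sqrt_sq hc]

theorem EuclideanSpace.norm_proj_le_one {𝕜 ι : Type*} [RCLike 𝕜] [Fintype ι] (i : ι) :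
    ‖EuclideanSpace.proj (𝕜 := 𝕜) i‖ ≤ 1 :=
  ContinuousLinearMap.opNorm_le_bound _ zero_le_one fun v ↦ by
    simpa using PiLp.norm_apply_le v i

theorem le_apply_sub_div_norm_sub_of_mem_closedBall {E : Type*} [SeminormedAddCommGroup E]
    [NormedSpace ℝ E] {φ : StrongDual ℝ E} (hφ : ‖φ‖ ≤ 1) {A d : ℝ} {x y z : E} (hA : 0 ≤ A)
    (hyd : (1 + A) * d ≤ A * ‖y - x‖) (hy : 2 * A < φ (y - x) / ‖y - x‖)
    (hz : z ∈ closedBall x d) : A ≤ φ (y - z) / ‖y - z‖ := by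
  have hφ_le (v : E) : φ v ≤ ‖v‖ :=
    (le_abs_self _).trans ((φ.le_of_opNorm_le hφ v).trans_eq (one_mul _))
  have hr : 0 < ‖y - x‖ := by
    by_contra! h
    rw [(norm_nonneg _).antisymm' h, div_zero] at hy
    linarith
  have hyx : 2 * A * ‖y - x‖ < φ (y - x) := (lt_div_iff₀ hr).1 hy
  rw [mem_closedBall, dist_eq_norm] at hz
  have hzx : φ (z - x) ≤ d := (hφ_le _).trans hz
  have hyz : ‖y - z‖ ≤ ‖y - x‖ + d := by
    calc ‖y - z‖ ≤ ‖y - x‖ + ‖x - z‖ := norm_sub_le_norm_sub_add_norm_sub y x z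
      _ ≤ ‖y - x‖ + d := by rw [norm_sub_rev x z]; gcongr
  have hsplit : φ (y - z) = φ (y - x) - φ (z - x) := by
    rw [← map_sub, sub_sub_sub_cancel_right]
  have key : A * ‖y - z‖ < φ (y - z) := by
    nlinarith [mul_le_mul_of_nonneg_left hyz hA]
  have hyz_pos : 0 < ‖y - z‖ :=
    ((mul_nonneg hA (norm_nonneg _)).trans_lt key).trans_le (hφ_le _)
  exact (le_div_iff₀ hyz_pos).2 key.le

theorem riesz_angle_estimate_general (n : ℕ) (i : Fin n)
    (x₀ : EuclideanSpace ℝ (Fin n)) (ℓ : ℝ)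
    (A₁ : ℝ) (hA₁ : 0 < A₁)
    (y : EuclideanSpace ℝ (Fin n))
    (hy1 : 2 * A₁ < (y i - x₀ i) / ‖y - x₀‖)
    (hy2 : Real.sqrt n * (2 / A₁ + 1) * ℓ < ‖y - x₀‖)
    (z : EuclideanSpace ℝ (Fin n)) (hz : ∀ j, |z j - x₀ j| ≤ ℓ / 2) :
    A₁ ≤ (y i - z i) / ‖y - z‖ := by
  have hℓ : 0 ≤ ℓ := by linarith [abs_nonneg (z i - x₀ i), hz i]
  have hz_ball : z ∈ closedBall x₀ (√n * (ℓ / 2)) := by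
    rw [mem_closedBall, dist_eq_norm]
    simpa using EuclideanSpace.norm_le_sqrt_card_mul (v := z - x₀) fun j ↦ hz j
  have hyd : (1 + A₁) * (√n * (ℓ / 2)) ≤ A₁ * ‖y - x₀‖ := by
    have h := mul_lt_mul_of_pos_left hy2 hA₁
    rw [show A₁ * (√n * (2 / A₁ + 1) * ℓ) = (2 + A₁) * √n * ℓ by field_simp] at h
    nlinarith [mul_nonneg (Real.sqrt_nonneg n) hℓ]
  exact le_apply_sub_div_norm_sub_of_mem_closedBall (EuclideanSpace.norm_proj_le_one i)
    hA₁.le hyd hy1 hz_ball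

/-- Observation (5.6): if `(y_i - (x₀)_i)/|y - x₀| > 2A₁` with `0 < A₁ < 1/2` and
`|y - x₀| > √n (2/A₁ + 1) ℓ(Q)`, then for every `z` in the cube `Q` of center `x₀` and
side `ℓ(Q)` one has `(y_i - z_i)/|y - z| ≥ A₁`. -/
theorem riesz_angle_estimate (n : ℕ) (hn : 0 < n) (i : Fin n)
    (x₀ : EuclideanSpace ℝ (Fin n)) (ℓ : ℝ) (hℓ : 0 < ℓ)
    (A₁ : ℝ) (hA₁ : 0 < A₁) (hA₁' : A₁ < 1 / 2)
    (y : EuclideanSpace ℝ (Fin n))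
    (hy1 : 2 * A₁ < (y i - x₀ i) / ‖y - x₀‖)
    (hy2 : Real.sqrt n * (2 / A₁ + 1) * ℓ < ‖y - x₀‖)
    (z : EuclideanSpace ℝ (Fin n)) (hz : ∀ j, |z j - x₀ j| ≤ ℓ / 2) :
    A₁ ≤ (y i - z i) / ‖y - z‖ :=
  riesz_angle_estimate_general n i x₀ ℓ A₁ hA₁ y hy1 hy2 z hz
end
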